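/- arXiv:0812.1961 — 6 statements merged into one kernel-verified Lean document; each statement's English description precedes it below -/
import Mathlib

section
/- For every m ≥ 0 and real x, x^{2m} = (1/((2m+1)·2^{2m})) · Σ_{n=0}^{m} (2n+1)·C(2m+1, m−n)·U_{2n}(x), where U_k are the Chebyshev polynomials of the second kind and C denotes the binomial coefficient. -/
open Polynomial Polynomial.Chebyshev Finset

private lemma usq (x : ℝ) (k : ℤ) :
    4 * x ^ 2 * (U ℝ k).eval x =
      (U ℝ (k + 2)).eval x + 2 * (U ℝ k).eval x + (U ℝ (k - 2)).eval x := by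
  have e1 := congrArg (Polynomial.eval x) (U_add_two ℝ k)
  have e2 := congrArg (Polynomial.eval x) (U_sub_two ℝ k)
  have e3 := congrArg (Polynomial.eval x) (U_sub_one ℝ k)
  simp only [eval_sub, eval_mul, eval_ofNat, eval_X] at e1 e2 e3
  linear_combination (-1 : ℝ) * e1 - e2 - 2 * x * e3

private lemma succ_right (N k : ℕ) (h : k ≤ N) :
    ((N.choose (k + 1) : ℝ)) * ((k : ℝ) + 1) = (N.choose k : ℝ) * ((N : ℝ) - k) := by
  have := Nat.choose_succ_right_eq N k
  calc ((N.choose (k+1) : ℝ)) * ((k:ℝ)+1) = ((N.choose (k+1) * (k+1) : ℕ) : ℝ) := by push_cast; ring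
    _ = ((N.choose k * (N - k) : ℕ) : ℝ) := by rw [this]
    _ = (N.choose k : ℝ) * ((N:ℝ) - k) := by push_cast [Nat.cast_sub h]; ring

private lemma absorb (N k : ℕ) (h : k ≤ N) :
    (((N + 1).choose k : ℝ)) * ((N : ℝ) + 1 - k) = ((N : ℝ) + 1) * (N.choose k : ℝ) := by
  have := Nat.choose_mul_succ_eq N k
  calc (((N + 1).choose k : ℝ)) * ((N : ℝ) + 1 - k)
      = (((N+1).choose k * (N + 1 - k) : ℕ) : ℝ) := by
        push_cast [Nat.cast_sub (by omega : k ≤ N+1)]; ring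
    _ = ((N.choose k * (N + 1) : ℕ) : ℝ) := by rw [this]
    _ = ((N : ℝ) + 1) * (N.choose k : ℝ) := by push_cast; ring

/-- coefficient in Snyder's identity, with out-of-range guard. -/
private noncomputable def bb (m n : ℕ) : ℝ :=
  if n ≤ m then (2 * (n : ℝ) + 1) * (Nat.choose (2 * m + 1) (m - n)) else 0

private lemma key_coeff (m n : ℕ) (hn : n ≤ m + 1) :
    (2 * (m : ℝ) + 1) * bb (m + 1) n =
      (2 * (m : ℝ) + 3) * ((if 1 ≤ n then bb m (n - 1) else 0) + 2 * bb m n + bb m (n + 1)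
        - (if n = 0 then bb m 0 else 0)) := by
  rcases Nat.eq_zero_or_pos n with rfl | hn1
  · -- n = 0
    rcases Nat.eq_zero_or_pos m with rfl | hm1
    · norm_num [bb]
    · obtain ⟨m', rfl⟩ : ∃ m', m = m' + 1 := ⟨m - 1, by omega⟩
      simp only [bb, if_pos (by omega : (0:ℕ) ≤ m'+1+1), if_pos (by omega : (0:ℕ) ≤ m'+1),
        if_pos (by omega : (1:ℕ) ≤ m'+1), if_neg (by omega : ¬ (1:ℕ) ≤ 0), if_pos rfl]
      simp only [show 2*(m'+1+1)+1 = 2*m'+5 from by ring, show (m'+1+1) - 0 = m'+2 from by omega,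
        show 2*(m'+1)+1 = 2*m'+3 from by ring, show (m'+1) - 0 = m'+1 from by omega,
        show (m'+1) - 1 = m' from by omega]
      have h1a := absorb (2*m'+4) (m'+2) (by omega)
      have h1b := absorb (2*m'+3) (m'+2) (by omega)
      have h2 := succ_right (2*m'+3) (m'+1) (by omega)
      have h3 := succ_right (2*m'+3) m' (by omega)
      simp only [show 2*m'+4+1 = 2*m'+5 from by omega, show 2*m'+3+1 = 2*m'+4 from by omega,
        show m'+1+1 = m'+2 from by omega] at h1a h1b h2 h3
      push_cast at h1a h1b h2 h3 ⊢
      have hq : ((m':ℝ)+2)*((m':ℝ)+3) ≠ 0 := by positivity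
      apply mul_left_cancel₀ hq
      linear_combination ((2*(m':ℝ)+3)*((m':ℝ)+2)) * h1a + ((2*(m':ℝ)+3)*(2*(m':ℝ)+5)) * h1b
        + (2*(2*(m':ℝ)+3)*(2*(m':ℝ)+5)) * h2 + (3*((m':ℝ)+2)*(2*(m':ℝ)+5)) * h3
  · -- n ≥ 1
    rcases Nat.lt_or_ge m (n + 1) with hc | hc
    · -- n = m or n = m + 1
      rcases Nat.eq_or_lt_of_le hn with rfl | hlt
      · -- n = m + 1
        simp only [bb, if_pos (le_refl (m+1)), if_neg (by omega : ¬ m + 1 ≤ m),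
          if_neg (by omega : ¬ m + 1 + 1 ≤ m), if_pos (by omega : 1 ≤ m + 1),
          if_neg (by omega : ¬ m + 1 = 0), if_pos (by omega : m + 1 - 1 ≤ m),
          show m + 1 - 1 = m from by omega, show m - m = 0 from by omega,
          show (m+1) - (m+1) = 0 from by omega, Nat.choose_zero_right, if_pos (le_refl m)]
        push_cast
        ring
      · -- n = m, and m ≥ 1
        have hnm : n = m := by omega
        subst hnm
        simp only [bb, if_pos (by omega : n ≤ n + 1), if_pos (le_refl n),
          if_neg (by omega : ¬ n + 1 ≤ n), if_pos (by omega : 1 ≤ n), if_neg (by omega : ¬ n = 0),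
          if_pos (by omega : n - 1 ≤ n),
          show n + 1 - n = 1 from by omega, show n - n = 0 from by omega,
          show n - (n-1) = 1 from by omega, Nat.choose_zero_right, Nat.choose_one_right]
        push_cast [Nat.cast_sub hn1]
        ring
    · -- generic: 1 ≤ n, n + 1 ≤ m
      obtain ⟨k, rfl⟩ : ∃ k, m = n + 1 + k := ⟨m - n - 1, by omega⟩
      simp only [bb, if_pos (by omega : n ≤ n+1+k+1), if_pos (by omega : n ≤ n+1+k),
        if_pos (by omega : n+1 ≤ n+1+k), if_pos (by omega : 1 ≤ n), if_neg (by omega : ¬ n = 0),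
        if_pos (by omega : n-1 ≤ n+1+k),
        show (n+1+k+1) - n = k+2 from by omega, show (n+1+k) - (n-1) = k+2 from by omega,
        show (n+1+k) - n = k+1 from by omega, show (n+1+k) - (n+1) = k from by omega,
        show 2*(n+1+k+1)+1 = (2*(n+1+k)+2)+1 from by ring]
      have h1a := absorb (2*(n+1+k)+2) (k+2) (by omega)
      have h1b := absorb (2*(n+1+k)+1) (k+2) (by omega)
      have h2 := succ_right (2*(n+1+k)+1) (k+1) (by omega)
      have h3 := succ_right (2*(n+1+k)+1) k (by omega)
      simp only [show 2*(n+1+k)+1+1 = 2*(n+1+k)+2 from by omega,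
        show k+1+1 = k+2 from by omega] at h1a h1b h2 h3
      push_cast [Nat.cast_sub hn1] at h1a h1b h2 h3 ⊢
      have hq : (((n:ℝ)+1+k)+(n:ℝ)+2)*(((n:ℝ)+1+k)+(n:ℝ)+1) ≠ 0 := by positivity
      apply mul_left_cancel₀ hq
      set M : ℝ := (n:ℝ)+1+(k:ℝ) with hM
      linear_combination
        ((2*M+1)*(2*(n:ℝ)+1)*(M+(n:ℝ)+1)) * h1a
        + ((2*M+1)*(2*(n:ℝ)+1)*(2*M+3)) * h1b
        + ((2*M+3)*(2*(2*(n:ℝ)+1)*(M+(n:ℝ)+2)+(2*(n:ℝ)+3)*(M-(n:ℝ)))) * h2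
        + ((M+(n:ℝ)+1)*(2*M+3)*(2*(n:ℝ)+3)) * h3

private noncomputable def uu (x : ℝ) (k : ℤ) : ℝ := (U ℝ k).eval x

private lemma usq' (x : ℝ) (k : ℤ) :
    4 * x ^ 2 * uu x k = uu x (k + 2) + 2 * uu x k + uu x (k - 2) := usq x k

private lemma key (m : ℕ) (x : ℝ) :
    (2 * (m : ℝ) + 1) * 4 ^ m * x ^ (2 * m)
      = ∑ n ∈ Finset.range (m + 1), bb m n * uu x (2 * (n : ℤ)) := by
  induction m with
  | zero => simp [bb, uu]
  | succ m ih =>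
    have h2m1 : (2 * (m : ℝ) + 1) ≠ 0 := by positivity
    have hbtop : bb m (m + 1) = 0 := by rw [bb, if_neg]; omega
    have hbtop2 : bb m (m + 1 + 1) = 0 := by rw [bb, if_neg]; omega
    apply mul_left_cancel₀ h2m1
    have hA : ∑ n ∈ Finset.range (m + 1), bb m n * uu x (2 * (n : ℤ) + 2)
        = ∑ n ∈ Finset.range (m + 1 + 1),
            (if 1 ≤ n then bb m (n - 1) else 0) * uu x (2 * (n : ℤ)) := by
      conv_rhs => rw [Finset.sum_range_succ' _ (m + 1)]
      rw [if_neg (by omega : ¬ (1:ℕ) ≤ 0), zero_mul, add_zero]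
      apply Finset.sum_congr rfl
      intro i _
      rw [if_pos (by omega : 1 ≤ i + 1), Nat.add_sub_cancel,
        show ((2:ℤ) * ((i + 1 : ℕ) : ℤ)) = 2 * (i : ℤ) + 2 by push_cast; ring]
    have hB : ∑ n ∈ Finset.range (m + 1), bb m n * uu x (2 * (n : ℤ))
        = ∑ n ∈ Finset.range (m + 1 + 1), bb m n * uu x (2 * (n : ℤ)) := by
      rw [Finset.sum_range_succ _ (m + 1), hbtop, zero_mul, add_zero]
    have hC : ∑ n ∈ Finset.range (m + 1), bb m n * uu x (2 * (n : ℤ) - 2)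
        = ∑ n ∈ Finset.range (m + 1 + 1),
            (bb m (n + 1) - if n = 0 then bb m 0 else 0) * uu x (2 * (n : ℤ)) := by
      conv_lhs => rw [Finset.sum_range_succ' _ m]
      have h0 : uu x (2 * ((0:ℕ) : ℤ) - 2) = -1 := by
        norm_num [uu, U_neg_two]
      rw [h0]
      have hsub : ∀ n ∈ Finset.range (m + 1 + 1),
          (bb m (n + 1) - if n = 0 then bb m 0 else 0) * uu x (2 * (n : ℤ))
            = bb m (n + 1) * uu x (2 * (n : ℤ))
              - (if n = 0 then bb m 0 * uu x (2 * (n : ℤ)) else 0) := by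
        intro n _
        by_cases hn : n = 0 <;> simp [hn] <;> ring
      rw [Finset.sum_congr rfl hsub, Finset.sum_sub_distrib, Finset.sum_ite_eq' _ 0]
      rw [if_pos (by simp : (0:ℕ) ∈ Finset.range (m + 1 + 1))]
      have hu0 : uu x (2 * ((0:ℕ) : ℤ)) = 1 := by norm_num [uu]
      rw [hu0, mul_one]
      rw [Finset.sum_range_succ _ (m + 1), Finset.sum_range_succ _ m, hbtop, hbtop2,
        zero_mul, zero_mul, add_zero, add_zero]
      have : ∀ i ∈ Finset.range m, bb m (i + 1) * uu x (2 * ((i + 1 : ℕ) : ℤ) - 2)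
          = bb m (i + 1) * uu x (2 * (i : ℤ)) := by
        intro i _
        rw [show (2 * ((i + 1 : ℕ) : ℤ) - 2) = 2 * (i : ℤ) by push_cast; ring]
      rw [Finset.sum_congr rfl this]
      ring
    calc (2 * (m:ℝ) + 1) * ((2 * ((m:ℕ) + 1 : ℕ) + 1) * 4 ^ (m + 1) * x ^ (2 * (m + 1)))
        = (2 * (m:ℝ) + 3) * ((2 * (m:ℝ) + 1) * 4 ^ m * x ^ (2 * m) * (4 * x ^ 2)) := by
          push_cast; ring
      _ = (2 * (m:ℝ) + 3) * ((∑ n ∈ Finset.range (m + 1), bb m n * uu x (2 * (n : ℤ))) * (4 * x ^ 2)) := by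
          rw [ih]
      _ = (2 * (m:ℝ) + 3) * ∑ n ∈ Finset.range (m + 1),
            (bb m n * uu x (2 * (n : ℤ) + 2) + 2 * (bb m n * uu x (2 * (n : ℤ)))
              + bb m n * uu x (2 * (n : ℤ) - 2)) := by
          rw [Finset.sum_mul]
          congr 1
          apply Finset.sum_congr rfl
          intro n _
          have := usq' x (2 * (n : ℤ))
          linear_combination bb m n * this
      _ = (2 * (m:ℝ) + 3) * ((∑ n ∈ Finset.range (m + 1), bb m n * uu x (2 * (n : ℤ) + 2))
            + 2 * (∑ n ∈ Finset.range (m + 1), bb m n * uu x (2 * (n : ℤ)))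
            + (∑ n ∈ Finset.range (m + 1), bb m n * uu x (2 * (n : ℤ) - 2))) := by
          rw [Finset.sum_add_distrib, Finset.sum_add_distrib, ← Finset.mul_sum]
      _ = (2 * (m:ℝ) + 3) * ∑ n ∈ Finset.range (m + 1 + 1),
            ((if 1 ≤ n then bb m (n - 1) else 0) + 2 * bb m n
              + (bb m (n + 1) - if n = 0 then bb m 0 else 0)) * uu x (2 * (n : ℤ)) := by
          rw [hA, hB, hC]
          congr 1
          rw [Finset.mul_sum, ← Finset.sum_add_distrib, ← Finset.sum_add_distrib]
          apply Finset.sum_congr rfl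
          intro n _
          ring
      _ = ∑ n ∈ Finset.range (m + 1 + 1),
            (2 * (m:ℝ) + 1) * (bb (m + 1) n * uu x (2 * (n : ℤ))) := by
          rw [Finset.mul_sum]
          apply Finset.sum_congr rfl
          intro n hn
          have hk := key_coeff m n (by have := Finset.mem_range.mp hn; omega)
          linear_combination uu x (2 * (n : ℤ)) * hk.symm
      _ = (2 * (m:ℝ) + 1) * ∑ n ∈ Finset.range (m + 1 + 1), bb (m + 1) n * uu x (2 * (n : ℤ)) := by
          rw [Finset.mul_sum]

/-- Snyder's identity: `x^(2m)` expands in Chebyshev polynomials of the second kind as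
`x^(2m) = (1/((2m+1)·2^(2m))) · Σ_{n=0}^{m} (2n+1)·C(2m+1, m−n)·U_{2n}(x)`. -/
theorem pow_even_eq_sum_chebyshevU (m : ℕ) (x : ℝ) :
    x ^ (2 * m) = (1 / ((2 * (m : ℝ) + 1) * 2 ^ (2 * m))) *
      ∑ n ∈ Finset.range (m + 1),
        (2 * (n : ℝ) + 1) * (Nat.choose (2 * m + 1) (m - n)) * (U ℝ (2 * (n : ℤ))).eval x := by
  have hk := key m x
  have hs : ∑ n ∈ Finset.range (m + 1),
        (2 * (n : ℝ) + 1) * (Nat.choose (2 * m + 1) (m - n)) * (U ℝ (2 * (n : ℤ))).eval x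
      = ∑ n ∈ Finset.range (m + 1), bb m n * uu x (2 * (n : ℤ)) := by
    apply Finset.sum_congr rfl
    intro n hn
    rw [bb, if_pos (by have := Finset.mem_range.mp hn; omega)]
    rfl
  rw [hs, ← hk, show ((2:ℝ)) ^ (2 * m) = 4 ^ m by rw [pow_mul]; norm_num]
  have h1 : (2 * (m:ℝ) + 1) ≠ 0 := by positivity
  have h4 : ((4:ℝ)) ^ m ≠ 0 := by positivity
  field_simp
end

section
/- Fix 0 ≤ s ≤ 1 and set V_{n,s} = U_n + √s·U_{n−1} (with U_{−1} ≡ 0). Then the polynomials V_{n,s} are orthogonal with respect to the measure on [−1,1] with density (2/π)·√(1−x²)/((1+s) + 2√s·x): ∫_{-1}^{1} V_{n,s}(x)·V_{n',s}(x)·(2/π)·(√(1−x²)/((1+s)+2√s·x)) dx = 0 whenever n ≠ n'. -/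
/-!
Put `s = t²` and `x = cos θ`. Then `V_n(cos θ) sin θ = sin((n+1)θ) + t sin(nθ)` and the density
becomes `(2/π) sin θ / |e^{iθ} + t|²`. Multiplying out two such numerators, the integrand turns into
a cosine polynomial without constant term minus `(1 - t²) Re(e^{i(N+1)θ} / (1 + t e^{iθ})) / π`,
`N = n + n' + 1`. That last term has integral zero over `[0, π]`, being the real part of a function
holomorphic in the disc and vanishing at `0`. Without complex analysis: its analogues `Q_j` for all
`j` satisfy `Q_j + t Q_{j+1} = 0` (the sum is the integral of `cos((j+1)θ)`) and are bounded, which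
forces `Q_j = 0` when `|t| < 1`; when `t = 1` the factor `1 - t²` kills the term.
-/

open Polynomial Polynomial.Chebyshev intervalIntegral Real MeasureTheory Set Filter Topology

theorem integral_cos_int_mul_eq_zero {k : ℤ} (hk : k ≠ 0) :
    ∫ θ in (0 : ℝ)..π, cos (k * θ) = 0 := by
  rw [integral_comp_mul_left (fun x => cos x) (Int.cast_ne_zero.2 hk), integral_cos]
  simp [sin_int_mul_pi]

theorem integral_eq_integral_sin_mul_comp_cos {E : Type*} [NormedAddCommGroup E] [NormedSpace ℝ E]
    (g : ℝ → E) :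
    ∫ x in (-1 : ℝ)..1, g x = ∫ θ in (0 : ℝ)..π, sin θ • g (cos θ) := by
  rw [integral_of_le (by norm_num), integral_of_le pi_pos.le, ← integral_Icc_eq_integral_Ioc,
    ← integral_Icc_eq_integral_Ioc, ← bijOn_cos.image_eq,
    integral_image_eq_integral_abs_deriv_smul measurableSet_Icc
      (fun θ _ => (hasDerivAt_cos θ).hasDerivWithinAt) injOn_cos]
  refine setIntegral_congr_fun measurableSet_Icc fun θ hθ => ?_
  rw [abs_neg, abs_of_nonneg (sin_nonneg_of_nonneg_of_le_pi hθ.1 hθ.2)]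

theorem U_add_mul_ite_U_sub_one_real_cos_mul_sin (t θ : ℝ) (k : ℕ) :
    ((U ℝ k).eval (cos θ) + t * (if k = 0 then 0 else (U ℝ ((k : ℤ) - 1)).eval (cos θ))) *
      sin θ = sin ((k + 1) * θ) + t * sin (k * θ) := by
  have hprev : (if k = 0 then 0 else (U ℝ ((k : ℤ) - 1)).eval (cos θ)) =
      (U ℝ ((k : ℤ) - 1)).eval (cos θ) := by
    split_ifs with hk
    · simp [hk]
    · rfl
  rw [hprev, add_mul, mul_assoc, U_real_cos, U_real_cos]
  push_cast
  ring_nf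

theorem sin_add_mul_sin_mul_sin_add_mul_sin (a b t θ : ℝ) :
    (sin ((a + 1) * θ) + t * sin (a * θ)) * (sin ((b + 1) * θ) + t * sin (b * θ)) =
      (1 + t ^ 2 + 2 * t * cos θ) * (cos ((a - b) * θ) - t * cos ((a + b + 1) * θ)) / 2 -
        (1 - t ^ 2) * (cos ((a + b + 2) * θ) + t * cos ((a + b + 1) * θ)) / 2 := by
  rw [show (a + 1) * θ = a * θ + θ by ring, show (b + 1) * θ = b * θ + θ by ring,
    show (a - b) * θ = a * θ - b * θ by ring, show (a + b + 1) * θ = a * θ + b * θ + θ by ring,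
    show (a + b + 2) * θ = a * θ + b * θ + θ + θ by ring]
  simp only [sin_add, cos_add, cos_sub]
  ring_nf
  simp only [sin_sq]
  ring

theorem eq_zero_of_add_mul_succ_eq_zero {Q : ℕ → ℝ} {t C : ℝ} (ht : |t| < 1)
    (hrec : ∀ j, Q j + t * Q (j + 1) = 0) (hbound : ∀ j, |Q j| ≤ C) (j : ℕ) : Q j = 0 := by
  have hpow : ∀ m, Q j = (-t) ^ m * Q (j + m) := by
    intro m
    induction m with
    | zero => simp
    | succ m ih => rw [ih, ← add_assoc, eq_neg_of_add_eq_zero_left (hrec (j + m))]; ring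
  have hle : ∀ m, |Q j| ≤ |t| ^ m * C := fun m => by
    rw [hpow m, abs_mul, abs_pow, abs_neg]
    exact mul_le_mul_of_nonneg_left (hbound _) (by positivity)
  have hlim : Tendsto (fun m => |t| ^ m * C) atTop (𝓝 0) := by
    simpa using (tendsto_pow_atTop_nhds_zero_of_lt_one (abs_nonneg t) ht).mul_const C
  exact abs_nonpos_iff.1 (ge_of_tendsto' hlim hle)

theorem one_add_sq_add_two_mul_cos (t θ : ℝ) :
    1 + t ^ 2 + 2 * t * cos θ = (t + cos θ) ^ 2 + sin θ ^ 2 := by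
  linear_combination -sin_sq_add_cos_sq θ

theorem one_add_sq_add_two_mul_cos_pos {θ : ℝ} (hθ : θ ∈ Ioo 0 π) (t : ℝ) :
    0 < 1 + t ^ 2 + 2 * t * cos θ := by
  rw [one_add_sq_add_two_mul_cos]
  have := sin_pos_of_pos_of_lt_pi hθ.1 hθ.2
  positivity

theorem sq_one_sub_abs_le_one_add_sq_add_two_mul_cos (t θ : ℝ) :
    (1 - |t|) ^ 2 ≤ 1 + t ^ 2 + 2 * t * cos θ := by
  have h : |t * cos θ| ≤ |t| := by
    rw [abs_mul]; exact mul_le_of_le_one_right (abs_nonneg t) (abs_cos_le_one θ)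
  nlinarith [neg_abs_le (t * cos θ), sq_abs t]

theorem sq_one_sub_abs_pos {t : ℝ} (ht : |t| < 1) : 0 < (1 - |t|) ^ 2 := by
  have := abs_nonneg t
  nlinarith

theorem one_add_sq_add_two_mul_cos_pos_of_abs_lt {t : ℝ} (ht : |t| < 1) (θ : ℝ) :
    0 < 1 + t ^ 2 + 2 * t * cos θ :=
  (sq_one_sub_abs_pos ht).trans_le (sq_one_sub_abs_le_one_add_sq_add_two_mul_cos t θ)

/-- `(1 - t²) Re (e^{i(j+1)θ} / (1 + t e^{iθ}))`. -/
noncomputable def poissonCos (t : ℝ) (j : ℕ) (θ : ℝ) : ℝ :=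
  (1 - t ^ 2) * (cos ((j + 1) * θ) + t * cos (j * θ)) / (1 + t ^ 2 + 2 * t * cos θ)

theorem poissonCos_add_mul_poissonCos_succ {t θ : ℝ} (hD : 1 + t ^ 2 + 2 * t * cos θ ≠ 0)
    (j : ℕ) :
    poissonCos t j θ + t * poissonCos t (j + 1) θ = (1 - t ^ 2) * cos ((j + 1) * θ) := by
  have hcos : cos ((j + 1 + 1) * θ) + cos (j * θ) = 2 * cos θ * cos ((j + 1) * θ) := by
    rw [show (j + 1 + 1) * θ = (j + 1) * θ + θ by ring, show j * θ = (j + 1) * θ - θ by ring,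
      cos_add, cos_sub]
    ring
  simp only [poissonCos, Nat.cast_succ]
  rw [mul_div_assoc', ← add_div, div_eq_iff hD]
  linear_combination (1 - t ^ 2) * t * hcos

theorem poissonCos_eq_zero {t : ℝ} (ht : |t| = 1) (j : ℕ) : poissonCos t j = 0 := by
  have : 1 - t ^ 2 = 0 := by rw [← sq_abs, ht]; norm_num
  ext θ
  simp [poissonCos, this]

theorem continuous_poissonCos {t : ℝ} (ht : |t| ≤ 1) (j : ℕ) : Continuous (poissonCos t j) := by
  rcases ht.lt_or_eq with ht | ht
  · exact .div (by fun_prop) (by fun_prop) fun θ =>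
      (one_add_sq_add_two_mul_cos_pos_of_abs_lt ht θ).ne'
  · rw [poissonCos_eq_zero ht]
    exact continuous_const

theorem abs_poissonCos_le {t : ℝ} (ht : |t| < 1) (j : ℕ) (θ : ℝ) :
    |poissonCos t j θ| ≤ 2 / (1 - |t|) ^ 2 := by
  have hfactor : |1 - t ^ 2| ≤ 1 :=
    abs_le.2 ⟨by nlinarith [sq_abs t, abs_nonneg t], by nlinarith⟩
  have hcos : |cos ((j + 1) * θ) + t * cos (j * θ)| ≤ 2 := by
    refine (abs_add_le _ _).trans ?_
    rw [abs_mul]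
    nlinarith [abs_cos_le_one ((j + 1) * θ), abs_cos_le_one (j * θ), abs_nonneg t,
      abs_nonneg (cos (j * θ))]
  rw [poissonCos, abs_div, abs_mul,
    abs_of_pos (one_add_sq_add_two_mul_cos_pos_of_abs_lt ht θ)]
  exact div_le_div₀ zero_le_two (by nlinarith [abs_nonneg (1 - t ^ 2)]) (sq_one_sub_abs_pos ht)
    (sq_one_sub_abs_le_one_add_sq_add_two_mul_cos t θ)

theorem integral_poissonCos {t : ℝ} (ht : |t| ≤ 1) (j : ℕ) :
    ∫ θ in (0 : ℝ)..π, poissonCos t j θ = 0 := by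
  rcases ht.lt_or_eq with ht | ht
  · have hint (k : ℕ) : IntervalIntegrable (poissonCos t k) volume 0 π :=
      (continuous_poissonCos ht.le k).intervalIntegrable 0 π
    refine eq_zero_of_add_mul_succ_eq_zero (Q := fun j => ∫ θ in (0 : ℝ)..π, poissonCos t j θ)
      (C := 2 / (1 - |t|) ^ 2 * π) ht (fun k => ?_) (fun k => ?_) j
    · rw [← intervalIntegral.integral_const_mul, ← integral_add (hint k) ((hint _).const_mul t)]
      simp_rw [poissonCos_add_mul_poissonCos_succ
        (one_add_sq_add_two_mul_cos_pos_of_abs_lt ht _).ne']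
      rw [intervalIntegral.integral_const_mul]
      have hcos := integral_cos_int_mul_eq_zero (k := k + 1) (by omega)
      push_cast at hcos
      rw [hcos, mul_zero]
    · simpa [abs_of_pos pi_pos] using
        norm_integral_le_of_norm_le_const (a := 0) (b := π) fun θ _ =>
          (Real.norm_eq_abs _).trans_le (abs_poissonCos_le ht k θ)
  · simp [poissonCos_eq_zero ht]

theorem sin_mul_mul_density_comp_cos_eq {t θ P Q : ℝ} (hθ : θ ∈ Ioo 0 π) {n n' : ℕ}
    (hP : P * sin θ = sin ((n + 1) * θ) + t * sin (n * θ))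
    (hQ : Q * sin θ = sin ((n' + 1) * θ) + t * sin (n' * θ)) :
    sin θ * (P * Q * ((2 / π) * (√(1 - cos θ ^ 2) / ((1 + t ^ 2) + 2 * t * cos θ)))) =
      (cos (((n - n' : ℤ) : ℝ) * θ) - t * cos (((n + n' + 1 : ℕ) : ℤ) * θ) -
        poissonCos t (n + n' + 1) θ) / π := by
  have hD := one_add_sq_add_two_mul_cos_pos hθ t
  rw [← sin_eq_sqrt_one_sub_cos_sq hθ.1.le hθ.2.le,
    show sin θ * (P * Q * (2 / π * (sin θ / (1 + t ^ 2 + 2 * t * cos θ)))) =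
      2 * ((P * sin θ) * (Q * sin θ)) / (1 + t ^ 2 + 2 * t * cos θ) / π by ring,
    hP, hQ, sin_add_mul_sin_mul_sin_add_mul_sin, poissonCos]
  push_cast
  field_simp
  ring_nf

/-- The polynomials `V_{n,s} = U_n + √s·U_{n−1}` (with `U_{−1} ≡ 0`) are orthogonal
with respect to the Marchenko–Pastur-type measure with density
`(2/π)·√(1−x²)/((1+s)+2√s·x)` on `[-1,1]`. -/
theorem chebyshevV_orthogonal_MP (s : ℝ) (hs0 : 0 ≤ s) (hs1 : s ≤ 1)
    (V : ℕ → ℝ → ℝ)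
    (hV : ∀ n x, V n x =
      (U ℝ n).eval x + Real.sqrt s * (if n = 0 then 0 else (U ℝ ((n : ℤ) - 1)).eval x))
    (n n' : ℕ) (hnn' : n ≠ n') :
    ∫ x in (-1 : ℝ)..1,
        V n x * V n' x *
          ((2 / Real.pi) * (Real.sqrt (1 - x ^ 2) / ((1 + s) + 2 * Real.sqrt s * x)))
      = 0 := by
  obtain ⟨t, ht0, ht1, rfl⟩ : ∃ t, 0 ≤ t ∧ t ≤ 1 ∧ s = t ^ 2 :=
    ⟨√s, sqrt_nonneg s, sqrt_le_one.2 hs1, (sq_sqrt hs0).symm⟩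
  have ht : |t| ≤ 1 := abs_le.2 ⟨by linarith, ht1⟩
  rw [sqrt_sq ht0] at hV ⊢
  have hVcos (k : ℕ) (θ : ℝ) : V k (cos θ) * sin θ = sin ((k + 1) * θ) + t * sin (k * θ) := by
    rw [hV, U_add_mul_ite_U_sub_one_real_cos_mul_sin]
  have hcos (c : ℝ) : IntervalIntegrable (fun θ => cos (c * θ)) volume 0 π :=
    Continuous.intervalIntegrable (by fun_prop) 0 π
  rw [integral_eq_integral_sin_mul_comp_cos]
  simp only [smul_eq_mul]
  rw [integral_congr_Ioo_of_le pi_pos.le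
      fun θ hθ => sin_mul_mul_density_comp_cos_eq hθ (hVcos n θ) (hVcos n' θ),
    intervalIntegral.integral_div,
    intervalIntegral.integral_sub ((hcos _).sub ((hcos _).const_mul t))
      ((continuous_poissonCos ht _).intervalIntegrable 0 π),
    intervalIntegral.integral_sub (hcos _) ((hcos _).const_mul t),
    intervalIntegral.integral_const_mul, integral_cos_int_mul_eq_zero (by omega),
    integral_cos_int_mul_eq_zero (by omega), integral_poissonCos ht]
  simp
end

section
/- Let N ≥ 3 and define polynomials P_n by P_0(x)=1, P_1(x)=x, P_2(x)=x²−(N−1), and P_n(x)=x·P_{n−1}(x)−(N−2)·P_{n−2}(x) for n ≥ 3. Then for all n ≥ 0, P_n(x) = (N−2)^{n/2}·[U_n(x/(2√(N−2))) − (1/(N−2))·U_{n−2}(x/(2√(N−2)))], where U_{−1} = U_{−2} = 0. -/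
/-!
With `s = √(N-2)` and `y = x / (2s)`, the scaled Chebyshev values `u n = sⁿ·U_n(y)` obey
`u (n+2) = x·u (n+1) - (N-2)·u n`, with `u 0 = 1` and `u 1 = x`. The differences
`u (n+2) - u n` obey the same recurrence, and they match `P` at `n = 2, 3`, so
`P (n+2) = u (n+2) - u n`, which is the formula since `(N-2)^{n/2} = sⁿ` and `s² = N-2`.
-/

open Polynomial Polynomial.Chebyshev

theorem Polynomial.Chebyshev.pow_mul_eval_U_add_two {R : Type*} [CommRing R] (s y : R) (n : ℕ) :
    s ^ (n + 2) * (U R ↑(n + 2)).eval y =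
      2 * s * y * (s ^ (n + 1) * (U R ↑(n + 1)).eval y) - s ^ 2 * (s ^ n * (U R n).eval y) := by
  push_cast
  rw [U_add_two]
  simp only [eval_sub, eval_mul, eval_ofNat, eval_X]
  ring

theorem add_two_eq_sub_of_recurrence {R : Type*} [CommRing R] {a u : ℕ → R} {x c : R}
    (hu : ∀ n, u (n + 2) = x * u (n + 1) - c * u n) (hu1 : u 1 = x * u 0)
    (ha : ∀ n, a (n + 3) = x * a (n + 2) - c * a (n + 1))
    (ha1 : a 1 = u 1) (ha2 : a 2 = u 2 - u 0) (n : ℕ) :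
    a (n + 2) = u (n + 2) - u n := by
  induction n using Nat.twoStepInduction with
  | zero => exact ha2
  | one => rw [ha, ha1, ha2, hu 1, hu1]; ring
  | more n ih₀ ih₁ => rw [ha, ih₁, ih₀, hu (n + 2), hu n, hu (n + 1)]; ring

/-- Lemma 2.1: the polynomials `P_n` defined by `P_0 = 1`, `P_1 = x`, `P_2 = x² − (N−1)`,
`P_n = x·P_{n−1} − (N−2)·P_{n−2}` satisfy
`P_n(x) = (N−2)^{n/2}·[U_n(x/(2√(N−2))) − (N−2)⁻¹·U_{n−2}(x/(2√(N−2)))]`,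
with the convention `U_{−1} = U_{−2} = 0`. -/
theorem P_eq_chebyshevU (N : ℕ) (hN : 3 ≤ N) (P : ℕ → ℝ → ℝ)
    (hP0 : ∀ x, P 0 x = 1)
    (hP1 : ∀ x, P 1 x = x)
    (hP2 : ∀ x, P 2 x = x ^ 2 - ((N : ℝ) - 1))
    (hPrec : ∀ n, 3 ≤ n → ∀ x, P n x = x * P (n - 1) x - ((N : ℝ) - 2) * P (n - 2) x)
    (n : ℕ) (x : ℝ) :
    P n x = ((N : ℝ) - 2) ^ ((n : ℝ) / 2) *
      ((U ℝ n).eval (x / (2 * Real.sqrt ((N : ℝ) - 2)))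
        - (1 / ((N : ℝ) - 2)) *
          (if 2 ≤ n then (U ℝ ((n : ℤ) - 2)).eval (x / (2 * Real.sqrt ((N : ℝ) - 2))) else 0)) := by
  have hc : (0 : ℝ) < N - 2 := sub_pos.mpr (by exact_mod_cast hN)
  rw [Real.rpow_div_two_eq_sqrt _ hc.le, Real.rpow_natCast]
  set c : ℝ := N - 2
  set s := Real.sqrt c
  have hs : s ≠ 0 := (Real.sqrt_pos.mpr hc).ne'
  have hs2 : s ^ 2 = c := Real.sq_sqrt hc.le
  set u : ℕ → ℝ := fun n ↦ s ^ n * (U ℝ n).eval (x / (2 * s))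
  have hx : 2 * s * (x / (2 * s)) = x := by field_simp
  have hu : ∀ n, u (n + 2) = x * u (n + 1) - c * u n := fun n ↦ by
    simpa only [u, hx, hs2] using pow_mul_eval_U_add_two s (x / (2 * s)) n
  have hu0 : u 0 = 1 := by simp [u]
  have hu1 : u 1 = x := by
    simp only [u, pow_one, Nat.cast_one, U_one, eval_mul, eval_ofNat, eval_X]
    field_simp
  have hP : ∀ n, P (n + 2) x = u (n + 2) - u n :=
    add_two_eq_sub_of_recurrence (a := (P · x)) hu (by rw [hu0, hu1, mul_one])
      (fun n ↦ hPrec (n + 3) (by omega) x) (by rw [hP1, hu1])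
      (by rw [hP2, hu, hu1, hu0]; ring)
  match n with
  | 0 => simp [hP0]
  | 1 =>
    conv_lhs => rw [hP1, ← hu1]
    simp [u]
  | n + 2 =>
    have hcast : ((n + 2 : ℕ) : ℤ) - 2 = n := by push_cast; ring
    rw [if_pos (by omega), hP, hcast]
    simp only [u, pow_add s n 2, hs2]
    field_simp
end

section
/- Let M, N be positive integers and define polynomials Q_n by Q_0(x)=1, Q_1(x)=x−N, and Q_n(x) = (x−(M+N−2))·Q_{n−1}(x) − (M−1)(N−1)·Q_{n−2}(x) for n ≥ 2. Then for all n ≥ 0, Q_n(x) = ((M−1)(N−1))^{n/2} · [U_n(y) + ((M−2)/√((M−1)(N−1)))·U_{n−1}(y)], where y = (x−(M+N−2))/(2√((M−1)(N−1))) and U_{−1} = 0. -/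
open Polynomial Polynomial.Chebyshev

/-! With `s = √((M-1)(N-1))`, the substitution `x - (M+N-2) = 2 s y` turns the recurrence for `Q_n`
into `Q_{n+2} = 2 s y Q_{n+1} - s² Q_n`, which `s^n U_n(y)` and `s^n U_{n-1}(y)` both satisfy by the
Chebyshev recurrence. The combination `s^n (U_n(y) + ((M-2)/s) U_{n-1}(y))` has the initial values
`1` and `x - N`, so it equals `Q_n`. -/

theorem eq_of_second_order_recurrence {R : Type*} [Semiring R] (a b : R) {f g : ℕ → R}
    (hf : ∀ n, f (n + 2) = a * f (n + 1) + b * f n)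
    (hg : ∀ n, g (n + 2) = a * g (n + 1) + b * g n)
    (h0 : f 0 = g 0) (h1 : f 1 = g 1) : f = g := by
  have hpair : ∀ n, f n = g n ∧ f (n + 1) = g (n + 1) := by
    intro n
    induction n with
    | zero => exact ⟨h0, h1⟩
    | succ n ih => exact ⟨ih.2, by rw [hf, hg, ih.1, ih.2]⟩
  exact funext fun n => (hpair n).1

noncomputable def scaledChebyshevU {R : Type*} [CommRing R] (s y b : R) (n : ℕ) : R :=
  s ^ n * ((U R n).eval y + b * (U R ((n : ℤ) - 1)).eval y)

theorem scaledChebyshevU_add_two {R : Type*} [CommRing R] (s y b : R) (n : ℕ) :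
    scaledChebyshevU s y b (n + 2) =
      2 * s * y * scaledChebyshevU s y b (n + 1) + -s ^ 2 * scaledChebyshevU s y b n := by
  have hU : ∀ k : ℤ, (U R (k + 2)).eval y = 2 * y * (U R (k + 1)).eval y - (U R k).eval y := by
    intro k
    simp [U_add_two]
  simp only [scaledChebyshevU]
  push_cast
  rw [show (n : ℤ) + 2 - 1 = (n - 1 : ℤ) + 2 by ring, show (n : ℤ) + 1 - 1 = (n - 1 : ℤ) + 1 by ring,
    hU n, hU ((n : ℤ) - 1), show (n : ℤ) - 1 + 1 = n by ring]
  ring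

/-- Lemma 5.1: the polynomials `Q_n` defined by `Q_0 = 1`, `Q_1 = x − N`,
`Q_n = (x−(M+N−2))·Q_{n−1} − (M−1)(N−1)·Q_{n−2}` satisfy
`Q_n(x) = ((M−1)(N−1))^{n/2}·[U_n(y) + ((M−2)/√((M−1)(N−1)))·U_{n−1}(y)]`,
where `y = (x−(M+N−2))/(2√((M−1)(N−1)))` and `U_{−1} = 0`. -/
theorem Q_eq_chebyshevU (M N : ℕ) (hM : 2 ≤ M) (hN : 2 ≤ N) (Q : ℕ → ℝ → ℝ)
    (hQ0 : ∀ x, Q 0 x = 1)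
    (hQ1 : ∀ x, Q 1 x = x - (N : ℝ))
    (hQrec : ∀ n, 2 ≤ n → ∀ x, Q n x =
      (x - ((M : ℝ) + (N : ℝ) - 2)) * Q (n - 1) x - ((M : ℝ) - 1) * ((N : ℝ) - 1) * Q (n - 2) x)
    (n : ℕ) (x : ℝ) :
    Q n x = (((M : ℝ) - 1) * ((N : ℝ) - 1)) ^ ((n : ℝ) / 2) *
      ((U ℝ n).eval ((x - ((M : ℝ) + (N : ℝ) - 2)) / (2 * Real.sqrt (((M : ℝ) - 1) * ((N : ℝ) - 1))))
        + (((M : ℝ) - 2) / Real.sqrt (((M : ℝ) - 1) * ((N : ℝ) - 1))) *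
          (if 1 ≤ n then
            (U ℝ ((n : ℤ) - 1)).eval
              ((x - ((M : ℝ) + (N : ℝ) - 2)) / (2 * Real.sqrt (((M : ℝ) - 1) * ((N : ℝ) - 1))))
          else 0)) := by
  set c : ℝ := ((M : ℝ) - 1) * ((N : ℝ) - 1)
  have hc : 0 < c := mul_pos (by norm_num; omega) (by norm_num; omega)
  set s := Real.sqrt c
  have hs : s ≠ 0 := (Real.sqrt_pos.mpr hc).ne'
  set y := (x - ((M : ℝ) + (N : ℝ) - 2)) / (2 * s)
  have hxy : x - ((M : ℝ) + (N : ℝ) - 2) = 2 * s * y := by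
    simp only [y]
    field_simp
  have hQ : (fun m => Q m x) = scaledChebyshevU s y (((M : ℝ) - 2) / s) := by
    refine eq_of_second_order_recurrence (2 * s * y) (-s ^ 2) (fun m => ?_)
      (scaledChebyshevU_add_two s y _) ?_ ?_
    · rw [hQrec (m + 2) (by omega), show m + 2 - 1 = m + 1 from rfl, Nat.add_sub_cancel, hxy,
        Real.sq_sqrt hc.le]
      ring
    · simp [scaledChebyshevU, hQ0]
    · simp only [scaledChebyshevU, hQ1, Nat.cast_one, pow_one, sub_self, U_zero, U_one, eval_one,
        eval_mul, eval_X, eval_ofNat]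
      field_simp
      linear_combination hxy
  rw [congrFun hQ n, scaledChebyshevU, Real.rpow_div_two_eq_sqrt _ hc.le, Real.rpow_natCast]
  split_ifs with hn
  · rfl
  · simp [Nat.lt_one_iff.mp (not_le.mp hn)]
end

section
/- Let A be an N×N Hermitian matrix with zeros on the diagonal and all off-diagonal entries of modulus 1 (i.e., |A_{uv}| = 1 for u ≠ v and A_{uv} = conj(A_{vu})). Define P_n as by P_0=1, P_1(x)=x, P_2(x)=x²−(N−1), P_n(x)=x P_{n−1}(x)−(N−2)P_{n−2}(x). Then for all n and all indices u_0, u_n, the matrix entry P_n(A)_{u_0 u_n} equals the sum over all non-backtracking paths u_0 u_1 ⋯ u_n (paths with u_j ≠ u_{j−1} for all j and u_j ≠ u_{j−2} for all j ≥ 2) of the products A_{u_0 u_1}·A_{u_1 u_2}·⋯·A_{u_{n−1} u_n}. -/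
/-!
Let `W_n` be the matrix whose `(u, w)` entry sums the weights of the non-backtracking walks
`u → w` of length `n`. Prepending a step `u → v` to a non-backtracking walk `v r₀ r₁ …` gives
a non-backtracking walk, except when `v = u`, where the weight `A u u = 0` vanishes, or when
`r₀ = u`, where the first two steps contribute `A u v * A v u = |A u v|² = 1`. The immediate
returns are thus in bijection with pairs of a non-backtracking walk `u r₁ …` of length `n` and a
vertex `v ∉ {u, r₁}`, of which there are `N - 2` (or `N - 1` when `n = 0`). Hence
`A W_{n+1} = W_{n+2} + (N - 2) W_n` (resp. `+ (N - 1) W_0`), the recursion of `P_n`.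
-/

open Polynomial Finset

section

variable {α : Type*}

def IsNonBacktracking {m : ℕ} (p : Fin (m + 1) → α) : Prop :=
  (∀ j : ℕ, ∀ hj : j < m, p ⟨j + 1, Nat.succ_lt_succ hj⟩ ≠ p ⟨j, Nat.lt_succ_of_lt hj⟩) ∧
  (∀ j : ℕ, ∀ hj : j + 2 ≤ m,
    p ⟨j + 2, Nat.lt_succ_of_le hj⟩ ≠ p ⟨j, Nat.lt_succ_of_le ((Nat.le_add_right j 2).trans hj)⟩)

theorem isNonBacktracking_cons_iff {m : ℕ} (a : α) (p : Fin (m + 1) → α) :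
    IsNonBacktracking (Fin.cons a p : Fin (m + 2) → α) ↔
      IsNonBacktracking p ∧ p 0 ≠ a ∧ ∀ h : 1 ≤ m, p ⟨1, by omega⟩ ≠ a := by
  constructor
  · rintro ⟨h1, h2⟩
    refine ⟨⟨fun j hj => h1 (j + 1) (by omega), fun j hj => h2 (j + 1) (by omega)⟩,
      ?_, fun hm => ?_⟩
    · simpa using h1 0 (by omega)
    · exact h2 0 (by omega)
  · rintro ⟨⟨h1, h2⟩, h10, h20⟩
    refine ⟨fun j hj => ?_, fun j hj => ?_⟩
    · rcases j with _ | j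
      · simpa using h10
      · exact h1 j (by omega)
    · rcases j with _ | j
      · exact h20 (by omega)
      · exact h2 j (by omega)

theorem isNonBacktracking_cons_cons_iff {m : ℕ} (a b : α) (p : Fin (m + 1) → α) :
    IsNonBacktracking (Fin.cons a (Fin.cons b p) : Fin (m + 3) → α) ↔
      IsNonBacktracking (Fin.cons b p : Fin (m + 2) → α) ∧ b ≠ a ∧ p 0 ≠ a := by
  simp [isNonBacktracking_cons_iff, Fin.mk_one]

theorem isNonBacktracking_fin_one (p : Fin 1 → α) : IsNonBacktracking p :=
  ⟨fun _ h => absurd h (Nat.not_lt_zero _), fun _ h => absurd h (by omega)⟩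

theorem isNonBacktracking_cons_fin_one_iff (a : α) (p : Fin 1 → α) :
    IsNonBacktracking (Fin.cons a p : Fin 2 → α) ↔ p 0 ≠ a := by
  rw [isNonBacktracking_cons_iff]
  exact ⟨fun h => h.2.1,
    fun h => ⟨isNonBacktracking_fin_one p, h, fun h1 => absurd h1 (by omega)⟩⟩

theorem Fin.sum_univ_pi_succ {M : Type*} [AddCommMonoid M] [Fintype α] {m : ℕ}
    (f : (Fin (m + 1) → α) → M) : ∑ p, f p = ∑ a, ∑ q, f (Fin.cons a q) := by
  rw [← (Fin.consEquiv fun _ => α).sum_comp, Fintype.sum_prod_type]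
  rfl

end

section

open scoped Classical

variable {α R : Type*} [CommRing R] (A : Matrix α α R)

def walkWeight {m : ℕ} (p : Fin (m + 1) → α) : R :=
  ∏ j : Fin m, A (p j.castSucc) (p j.succ)

theorem walkWeight_cons {m : ℕ} (a : α) (p : Fin (m + 1) → α) :
    walkWeight A (Fin.cons a p : Fin (m + 2) → α) = A a (p 0) * walkWeight A p := by
  simp [walkWeight, Fin.prod_univ_succ]

noncomputable def nonBacktrackingWalkSum [Fintype α] (m : ℕ) : Matrix α α R :=
  Matrix.of fun u w => ∑ p ∈ univ.filter (fun p : Fin (m + 1) → α =>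
    p 0 = u ∧ p (Fin.last m) = w ∧ IsNonBacktracking p), walkWeight A p

theorem nonBacktrackingWalkSum_succ_apply [Fintype α] (m : ℕ) (u w : α) :
    nonBacktrackingWalkSum A (m + 1) u w = ∑ q : Fin (m + 1) → α,
      if q (Fin.last m) = w ∧ IsNonBacktracking (Fin.cons u q : Fin (m + 2) → α) then
        walkWeight A (Fin.cons u q : Fin (m + 2) → α) else 0 := by
  rw [nonBacktrackingWalkSum, Matrix.of_apply, sum_filter, Fin.sum_univ_pi_succ, sum_comm]
  simp only [Fin.cons_zero, ← Fin.succ_last, Fin.cons_succ, ite_and, sum_ite_eq']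
  simp

theorem nonBacktrackingWalkSum_zero [Fintype α] [DecidableEq α] :
    nonBacktrackingWalkSum A 0 = 1 := by
  ext u w
  rw [nonBacktrackingWalkSum, Matrix.of_apply, sum_filter, Fin.sum_univ_pi_succ]
  simp [walkWeight, isNonBacktracking_fin_one, Matrix.one_apply, ite_and, eq_comm]

theorem nonBacktrackingWalkSum_one [Fintype α] (hdiag : ∀ u, A u u = 0) :
    nonBacktrackingWalkSum A 1 = A := by
  ext u w
  rw [nonBacktrackingWalkSum_succ_apply, Fin.sum_univ_pi_succ]
  rcases eq_or_ne u w with rfl | huw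
  · simp [isNonBacktracking_cons_fin_one_iff, hdiag]
  · simp [isNonBacktracking_cons_fin_one_iff, walkWeight, ite_and, huw.symm]

theorem card_filter_isNonBacktracking_cons_add_one [Fintype α] (r : Fin 1 → α) :
    #{v | IsNonBacktracking (Fin.cons v r : Fin 2 → α)} + 1 = Fintype.card α := by
  have : ({v | IsNonBacktracking (Fin.cons v r : Fin 2 → α)} : Finset α) =
      univ.erase (r 0) := by
    ext v
    simp [isNonBacktracking_cons_fin_one_iff, eq_comm]
  rw [this, card_erase_add_one (mem_univ _), card_univ]

theorem card_filter_isNonBacktracking_cons_add_two [Fintype α] {m : ℕ} (r : Fin (m + 2) → α)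
    (hr : IsNonBacktracking r) :
    #{v | IsNonBacktracking (Fin.cons v r : Fin (m + 3) → α)} + 2 = Fintype.card α := by
  have : ({v | IsNonBacktracking (Fin.cons v r : Fin (m + 3) → α)} : Finset α) =
      {r 0, r 1}ᶜ := by
    ext v
    simp [isNonBacktracking_cons_iff, hr, Fin.mk_one, eq_comm]
  have h10 : r 1 ≠ r 0 := by simpa using hr.1 0 (by omega)
  rw [this, ← card_compl_add_card {r 0, r 1}, card_pair h10.symm]

variable {A}

theorem ite_isNonBacktracking_cons_eq (hdiag : ∀ u, A u u = 0)
    (hunit : ∀ u v, u ≠ v → A u v * A v u = 1) {m : ℕ} (u v : α) (r : Fin (m + 1) → α) :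
    (if IsNonBacktracking (Fin.cons v r : Fin (m + 2) → α) then
        walkWeight A (Fin.cons u (Fin.cons v r) : Fin (m + 3) → α) else 0) =
      (if IsNonBacktracking (Fin.cons u (Fin.cons v r) : Fin (m + 3) → α) then
        walkWeight A (Fin.cons u (Fin.cons v r) : Fin (m + 3) → α) else 0) +
      if r 0 = u ∧ IsNonBacktracking (Fin.cons v r : Fin (m + 2) → α) then
        walkWeight A r else 0 := by
  rw [isNonBacktracking_cons_cons_iff]
  by_cases hnb : IsNonBacktracking (Fin.cons v r : Fin (m + 2) → α)
  swap
  · simp [hnb]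
  simp only [hnb, if_true, true_and]
  rcases eq_or_ne (r 0) u with rfl | hr0
  · have hv : r 0 ≠ v := ((isNonBacktracking_cons_iff v r).1 hnb).2.1
    simp [walkWeight_cons, ← mul_assoc, hunit _ _ hv]
  · rcases eq_or_ne v u with rfl | hvu
    · simp [walkWeight_cons, hdiag, hr0]
    · simp [hvu, hr0]

theorem mul_nonBacktrackingWalkSum_succ [Fintype α] (hdiag : ∀ u, A u u = 0)
    (hunit : ∀ u v, u ≠ v → A u v * A v u = 1) {m : ℕ} (c : R)
    (hc : ∀ r : Fin (m + 1) → α, IsNonBacktracking r →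
      (#{v | IsNonBacktracking (Fin.cons v r : Fin (m + 2) → α)} : R) = c) :
    A * nonBacktrackingWalkSum A (m + 1) =
      nonBacktrackingWalkSum A (m + 2) + c • nonBacktrackingWalkSum A m := by
  ext u w
  have backtracking : c * nonBacktrackingWalkSum A m u w = ∑ v, ∑ r : Fin (m + 1) → α,
      if r (Fin.last m) = w ∧ r 0 = u ∧
          IsNonBacktracking (Fin.cons v r : Fin (m + 2) → α) then walkWeight A r else 0 := by
    rw [nonBacktrackingWalkSum, Matrix.of_apply, mul_sum, sum_filter, sum_comm]
    refine sum_congr rfl fun r _ => ?_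
    by_cases hr : r 0 = u ∧ r (Fin.last m) = w ∧ IsNonBacktracking r
    · rw [if_pos hr, ← hc r hr.2.2, ← nsmul_eq_mul, ← sum_const, sum_filter]
      simp [hr]
    · rw [if_neg hr]
      refine (sum_eq_zero fun v _ => if_neg ?_).symm
      rintro ⟨hw, hu, hnb⟩
      exact hr ⟨hu, hw, ((isNonBacktracking_cons_iff v r).1 hnb).1⟩
  rw [Matrix.mul_apply, Matrix.add_apply, Matrix.smul_apply, smul_eq_mul,
    nonBacktrackingWalkSum_succ_apply, Fin.sum_univ_pi_succ, backtracking,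
    ← sum_add_distrib]
  refine sum_congr rfl fun v _ => ?_
  rw [nonBacktrackingWalkSum_succ_apply, mul_sum, ← sum_add_distrib]
  refine sum_congr rfl fun r _ => ?_
  have hweight := walkWeight_cons A u (Fin.cons v r : Fin (m + 2) → α)
  rw [Fin.cons_zero] at hweight
  by_cases hw : r (Fin.last m) = w
  · simp only [← Fin.succ_last, Fin.cons_succ, hw, true_and, mul_ite, mul_zero, ← hweight]
    exact ite_isNonBacktracking_cons_eq hdiag hunit u v r
  · simp [← Fin.succ_last, Fin.cons_succ, hw]

theorem nonBacktrackingWalkSum_two [Fintype α] [DecidableEq α] (hdiag : ∀ u, A u u = 0)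
    (hunit : ∀ u v, u ≠ v → A u v * A v u = 1) :
    nonBacktrackingWalkSum A 2 = A ^ 2 - ((Fintype.card α : R) - 1) • 1 := by
  have hc (r : Fin 1 → α) (_ : IsNonBacktracking r) :
      (#{v | IsNonBacktracking (Fin.cons v r : Fin 2 → α)} : R) = Fintype.card α - 1 := by
    rw [← card_filter_isNonBacktracking_cons_add_one r, Nat.cast_add_one, add_sub_cancel_right]
  have h := mul_nonBacktrackingWalkSum_succ hdiag hunit _ hc
  rw [nonBacktrackingWalkSum_one A hdiag, nonBacktrackingWalkSum_zero] at h
  rw [sq, h, add_sub_cancel_right]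

theorem nonBacktrackingWalkSum_add_three [Fintype α] (hdiag : ∀ u, A u u = 0)
    (hunit : ∀ u v, u ≠ v → A u v * A v u = 1) (m : ℕ) :
    nonBacktrackingWalkSum A (m + 3) = A * nonBacktrackingWalkSum A (m + 2) -
      ((Fintype.card α : R) - 2) • nonBacktrackingWalkSum A (m + 1) := by
  have hc (r : Fin (m + 2) → α) (hr : IsNonBacktracking r) :
      (#{v | IsNonBacktracking (Fin.cons v r : Fin (m + 3) → α)} : R) = Fintype.card α - 2 := by
    rw [← card_filter_isNonBacktracking_cons_add_two r hr, Nat.cast_add, Nat.cast_two,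
      add_sub_cancel_right]
  rw [eq_sub_iff_add_eq, ← mul_nonBacktrackingWalkSum_succ hdiag hunit _ hc]

end

open scoped Classical in
/-- Claim 2.2: for a Hermitian matrix `A` with zero diagonal and unimodular off-diagonal
entries, the entry `P_n(A)_{u₀ uₙ}` is the sum over non-backtracking paths from `u₀` to `uₙ`
of the products of the entries of `A` along the path. -/
theorem P_entry_eq_sum_nonbacktracking (N : ℕ) (A : Matrix (Fin N) (Fin N) ℂ)
    (hherm : A.IsHermitian)
    (hdiag : ∀ u, A u u = 0)
    (hmod : ∀ u v, u ≠ v → ‖A u v‖ = 1)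
    (P : ℕ → Polynomial ℂ)
    (hP0 : P 0 = 1)
    (hP1 : P 1 = Polynomial.X)
    (hP2 : P 2 = Polynomial.X ^ 2 - Polynomial.C ((N : ℂ) - 1))
    (hPrec : ∀ n, 3 ≤ n →
      P n = Polynomial.X * P (n - 1) - Polynomial.C ((N : ℂ) - 2) * P (n - 2))
    (n : ℕ) (u₀ uₙ : Fin N) :
    (Polynomial.aeval A (P n)) u₀ uₙ =
      ∑ u ∈ Finset.univ.filter (fun u : Fin (n + 1) → Fin N =>
          u 0 = u₀ ∧ u (Fin.last n) = uₙ ∧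
          (∀ j : ℕ, ∀ hj : j < n, u ⟨j + 1, by omega⟩ ≠ u ⟨j, by omega⟩) ∧
          (∀ j : ℕ, ∀ hj : j + 2 ≤ n, u ⟨j + 2, by omega⟩ ≠ u ⟨j, by omega⟩)),
        ∏ j : Fin n, A (u j.castSucc) (u j.succ) := by
  have hunit (u v : Fin N) (huv : u ≠ v) : A u v * A v u = 1 := by
    rw [← hherm.apply v u, RCLike.star_def, RCLike.mul_conj, hmod u v huv]
    norm_num
  have key (n : ℕ) : aeval A (P n) = nonBacktrackingWalkSum A n := by
    induction n using Nat.strong_induction_on with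
    | _ n ih =>
      match n with
      | 0 => rw [hP0, map_one, nonBacktrackingWalkSum_zero]
      | 1 => rw [hP1, aeval_X, nonBacktrackingWalkSum_one A hdiag]
      | 2 =>
        rw [hP2, nonBacktrackingWalkSum_two hdiag hunit, map_sub, map_pow, aeval_X, aeval_C,
          Algebra.algebraMap_eq_smul_one, Fintype.card_fin]
      | k + 3 =>
        rw [hPrec (k + 3) (by omega), nonBacktrackingWalkSum_add_three hdiag hunit]
        simp [ih, Algebra.smul_def]
  rw [key, nonBacktrackingWalkSum, Matrix.of_apply]
  congr
end

section
/- For positive reals N and integers n, m with 0 ≤ m, the sum Σ_{n=0}^{m} n²·exp(−c·n²/m + C·n^{3/2}/N^{1/2}) is at most C'·m^{3/2}·exp(C''·m³/N²) for suitable positive constants C', C'' depending only on c and C. -/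
/-!
Young's inequality absorbs the perturbation into half of the Gaussian,
`C n^{3/2} / √N ≤ c n² / (2m) + 8 C⁴ m³ / (c³ N²)`, at the cost of the factor
`exp (C'' m³ / N²)`. Completing the square, `exp (-c n² / (2m)) ≤ exp (c / 2) · exp (-b n)`
with `b = c / √m`, and `∑ n² exp (-b n) ≤ 2 exp b / b³` is a multiple of `m^{3/2}`.
-/

open Finset Real

/-- Young's inequality with exponents `4/3` and `4`. -/
theorem mul_pow_three_le_mul_pow_four_add {A B t : ℝ} (hB : 0 < B) (ht : 0 ≤ t) :
    A * t ^ 3 ≤ B * t ^ 4 + A ^ 4 / B ^ 3 := by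
  rcases le_or_gt A (B * t) with hA | hA
  · have : A * t ^ 3 ≤ B * t ^ 4 := by nlinarith [pow_nonneg ht 3]
    linarith [show 0 ≤ A ^ 4 / B ^ 3 by positivity]
  · have htA : t ^ 3 ≤ (A / B) ^ 3 :=
      pow_le_pow_left₀ ht (by rw [le_div_iff₀ hB]; linarith) 3
    have hA0 : 0 < A := (mul_nonneg hB.le ht).trans_lt hA
    have : A * t ^ 3 ≤ A ^ 4 / B ^ 3 := by
      calc A * t ^ 3 ≤ A * (A / B) ^ 3 := by gcongr
        _ = A ^ 4 / B ^ 3 := by ring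
    linarith [show 0 ≤ B * t ^ 4 by positivity]

theorem sum_range_pow_mul_exp_neg_mul_sq_le {α b : ℝ} (hα : 0 < α) (hb : 0 < b) (k M : ℕ) :
    ∑ i ∈ range M, (i : ℝ) ^ k * exp (-(α * i ^ 2)) ≤
      exp (b ^ 2 / (4 * α)) * (exp b * k.factorial / b ^ (k + 1)) := by
  have completing_square (x : ℝ) : -(α * x ^ 2) ≤ b ^ 2 / (4 * α) + -(b * x) := by
    have : b ^ 2 / (4 * α) - b * x + α * x ^ 2 = α * (x - b / (2 * α)) ^ 2 := by
      field_simp; ring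
    linarith [mul_nonneg hα.le (sq_nonneg (x - b / (2 * α)))]
  calc ∑ i ∈ range M, (i : ℝ) ^ k * exp (-(α * i ^ 2))
      ≤ ∑ i ∈ range M, (i : ℝ) ^ k * (exp (b ^ 2 / (4 * α)) * exp (-(b * i))) := by
        gcongr with i
        rw [← exp_add]
        exact exp_le_exp.2 (completing_square i)
    _ = exp (b ^ 2 / (4 * α)) * ∑ i ∈ Ico 0 M, (i : ℝ) ^ k * exp (-(b * i)) := by
        rw [mul_sum, range_eq_Ico]
        exact sum_congr rfl fun _ _ ↦ by ring
    _ ≤ exp (b ^ 2 / (4 * α)) * (exp b * k.factorial / b ^ (k + 1)) := by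
        gcongr
        exact sum_Ico_pow_mul_exp_neg_le hb

theorem neg_mul_sq_div_add_mul_rpow_div_sqrt_le {c : ℝ} (hc : 0 < c) (C : ℝ) {x m N : ℝ}
    (hx : 0 ≤ x) (hm : 0 < m) (hN : 0 < N) :
    -c * x ^ 2 / m + C * x ^ ((3 : ℝ) / 2) / √N ≤
      -(c / (2 * m) * x ^ 2) + 8 * C ^ 4 / c ^ 3 * m ^ 3 / N ^ 2 := by
  have hx32 : x ^ ((3 : ℝ) / 2) = √x ^ 3 := by
    rw [rpow_div_two_eq_sqrt _ hx]; norm_cast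
  have hx2 : x ^ 2 = √x ^ 4 := by rw [show 4 = 2 * 2 by rfl, pow_mul, sq_sqrt hx]
  have hN2 : N ^ 2 = √N ^ 4 := by rw [show 4 = 2 * 2 by rfl, pow_mul, sq_sqrt hN.le]
  have young := mul_pow_three_le_mul_pow_four_add (A := C / √N) (B := c / (2 * m))
    (by positivity) (sqrt_nonneg x)
  have hsplit : -c * x ^ 2 / m = -(c / (2 * m) * x ^ 2) - c / (2 * m) * x ^ 2 := by
    field_simp; ring
  have hconst : (C / √N) ^ 4 / (c / (2 * m)) ^ 3 = 8 * C ^ 4 / c ^ 3 * m ^ 3 / N ^ 2 := by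
    rw [hN2]; field_simp; ring
  rw [hsplit, hx32, hx2, ← hconst]
  linarith [show C * √x ^ 3 / √N = C / √N * √x ^ 3 by ring]

theorem sum_range_sq_mul_exp_neg_mul_sq_le {c m : ℝ} (hc : 0 < c) (hm : 1 ≤ m) (M : ℕ) :
    ∑ n ∈ range M, (n : ℝ) ^ 2 * exp (-(c / (2 * m) * n ^ 2)) ≤
      2 * exp (3 * c / 2) / c ^ 3 * m ^ ((3 : ℝ) / 2) := by
  have hm0 : 0 < m := one_pos.trans_le hm
  have hb : (c / √m) ^ 2 / (4 * (c / (2 * m))) = c / 2 := by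
    rw [div_pow, sq_sqrt hm0.le]; field_simp; ring
  calc _ ≤ exp ((c / √m) ^ 2 / (4 * (c / (2 * m)))) *
          (exp (c / √m) * (2 : ℕ).factorial / (c / √m) ^ 3) :=
        sum_range_pow_mul_exp_neg_mul_sq_le (by positivity) (by positivity) 2 M
    _ ≤ exp (c / 2) * (exp c * 2 / (c / √m) ^ 3) := by
        rw [hb]
        gcongr
        · exact div_le_self hc.le (one_le_sqrt.2 hm)
        · norm_num
    _ = _ := by
        rw [rpow_div_two_eq_sqrt _ hm0.le, show 3 * c / 2 = c / 2 + c by ring, exp_add]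
        norm_cast
        field_simp

/-- The key summation estimate: for constants `c, C > 0` there are `C', C'' > 0` such that
for every `m ≥ 1` and real `N > 0`,
`Σ_{n=0}^{m} n²·exp(−c·n²/m + C·n^{3/2}/√N) ≤ C'·m^{3/2}·exp(C''·m³/N²)`. -/
theorem sum_exp_estimate (c C : ℝ) (hc : 0 < c) (hC : 0 < C) :
    ∃ C' C'' : ℝ, 0 < C' ∧ 0 < C'' ∧
      ∀ m : ℕ, 1 ≤ m → ∀ N : ℝ, 0 < N →
        ∑ n ∈ Finset.range (m + 1),
            (n : ℝ) ^ 2 *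
              Real.exp (-c * (n : ℝ) ^ 2 / (m : ℝ) +
                C * (n : ℝ) ^ ((3 : ℝ) / 2) / Real.sqrt N)
          ≤ C' * (m : ℝ) ^ ((3 : ℝ) / 2) * Real.exp (C'' * (m : ℝ) ^ 3 / N ^ 2) := by
  refine ⟨2 * exp (3 * c / 2) / c ^ 3, 8 * C ^ 4 / c ^ 3, by positivity, by positivity, ?_⟩
  intro m hm N hN
  set E := exp (8 * C ^ 4 / c ^ 3 * (m : ℝ) ^ 3 / N ^ 2)
  calc _ ≤ ∑ n ∈ range (m + 1), (n : ℝ) ^ 2 * (exp (-(c / (2 * m) * n ^ 2)) * E) := by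
        gcongr with n
        rw [← exp_add]
        exact exp_le_exp.2 (neg_mul_sq_div_add_mul_rpow_div_sqrt_le hc C n.cast_nonneg
          (by positivity) hN)
    _ = (∑ n ∈ range (m + 1), (n : ℝ) ^ 2 * exp (-(c / (2 * m) * n ^ 2))) * E := by
        rw [sum_mul]; exact sum_congr rfl fun _ _ ↦ by ring
    _ ≤ _ := by
        gcongr
        exact sum_range_sq_mul_exp_neg_mul_sq_le hc (by exact_mod_cast hm) _
end
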